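/- arXiv:2103.15703 — 3 statements merged into one kernel-verified Lean document; each statement's English description precedes it below -/
import Mathlib

section
/- Let G be a directed graph, S a set of vertices, x ∈ S, and P a path from x to a vertex y. Let G' be the graph obtained from G by reversing all edges along P. If y ∈ S, then the number of edges from S to V∖S in G' equals the number of edges from S to V∖S in G; if y ∉ S, then the number of edges from S to V∖S in G' equals one less than that number in G. -/
/-!
Reversing the edges of `P` removes each of them from the cut `E(S, V ∖ S)` if it leaves `S` and
adds it if it enters `S`; since `P` has distinct vertices, its edges form a sub-multiset of `G`.
Along a walk that starts in `S`, exits from `S` and entries into `S` alternate, so there are as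
many exits as entries when the walk ends in `S`, and one exit more otherwise.
-/

namespace List

variable {V : Type*}

theorem Nodup.consecutivePairs {l : List V} (h : l.Nodup) : l.consecutivePairs.Nodup := by
  refine Nodup.of_map Prod.snd ?_
  rw [List.consecutivePairs, map_snd_zip (by simp)]
  exact h.sublist (tail_sublist l)

theorem IsChain.rel_of_mem_consecutivePairs {R : V → V → Prop} {l : List V} (h : l.IsChain R)
    {e : V × V} (he : e ∈ l.consecutivePairs) : R e.1 e.2 := by
  induction l using twoStepInduction with
  | nil | singleton => simp [consecutivePairs] at he
  | cons_cons a b l _ ih =>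
    rw [consecutivePairs, tail_cons, zip_cons_cons, mem_cons] at he
    rcases he with rfl | he
    · exact (isChain_cons_cons.mp h).1
    · exact ih b (isChain_cons_cons.mp h).2 he

theorem card_exits_add_ite_mem_last [DecidableEq V] (S : Finset V) {l : List V} {a b : V}
    (ha : l.head? = some a) (hb : l.getLast? = some b) :
    Multiset.card (Multiset.filter (fun e : V × V => e.1 ∈ S ∧ e.2 ∉ S) l.consecutivePairs)
        + (if b ∈ S then 1 else 0)
      = Multiset.card (Multiset.filter (fun e : V × V => e.2 ∈ S ∧ e.1 ∉ S) l.consecutivePairs)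
        + (if a ∈ S then 1 else 0) := by
  induction l using twoStepInduction generalizing a with
  | nil => simp at ha
  | singleton c =>
    simp only [head?_cons, getLast?_singleton, Option.some.injEq] at ha hb
    subst ha hb
    simp [consecutivePairs]
  | cons_cons c d l _ ih =>
    simp only [head?_cons, Option.some.injEq] at ha
    subst ha
    have := ih d rfl (by rwa [getLast?_cons_cons] at hb)
    by_cases hc : c ∈ S <;> by_cases hd : d ∈ S <;>
      simp [consecutivePairs, hc, hd] at this ⊢ <;> omega

end List

theorem Multiset.card_filter_reverse_add_card_filter {α : Type*} [DecidableEq α]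
    {G L : Multiset (α × α)} (hLG : L ≤ G) (p : α × α → Prop) [DecidablePred p] :
    card ((G - L + L.map Prod.swap).filter p) + card (L.filter p)
      = card (G.filter p) + card (L.filter fun e => p e.swap) := by
  conv_rhs => rw [← tsub_add_cancel_of_le hLG]
  rw [filter_add, filter_add, card_add, card_add, filter_map, card_map]
  exact add_right_comm _ _ _

/-- Path reversal observation. `G` is a finite directed (multi)graph given as a
multiset of directed edges, `S` a vertex set containing `x`, and `P` a directed path
(list of distinct vertices, consecutive pairs edges of `G`) from `x` to `y`. `G'` is obtained
by reversing all edges along `P`. Then the number of edges from `S` to `V \ S` is unchanged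
if `y ∈ S`, and drops by exactly one if `y ∉ S`. -/
theorem stmt0 {V : Type*} [DecidableEq V]
    (G : Multiset (V × V)) (S : Finset V) (x y : V) (P : List V)
    (hx : x ∈ S)
    (hchain : P.Chain' (fun u v => (u, v) ∈ G))
    (hhead : P.head? = some x)
    (hlast : P.getLast? = some y)
    (hnodup : P.Nodup)
    (G' : Multiset (V × V))
    (hG' : G' = (G - ↑(P.zip P.tail))
        + ((↑(P.zip P.tail) : Multiset (V × V)).map Prod.swap)) :
    (y ∈ S → Multiset.card (G'.filter fun e => e.1 ∈ S ∧ e.2 ∉ S)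
        = Multiset.card (G.filter fun e => e.1 ∈ S ∧ e.2 ∉ S)) ∧
    (y ∉ S → Multiset.card (G'.filter fun e => e.1 ∈ S ∧ e.2 ∉ S)
        = Multiset.card (G.filter fun e => e.1 ∈ S ∧ e.2 ∉ S) - 1) := by
  have hLG : (P.consecutivePairs : Multiset (V × V)) ≤ G :=
    (Multiset.le_iff_subset (Multiset.coe_nodup.2 hnodup.consecutivePairs)).2
      fun _ he => hchain.rel_of_mem_consecutivePairs he
  have hreverse := Multiset.card_filter_reverse_add_card_filter hLG
    fun e : V × V => e.1 ∈ S ∧ e.2 ∉ S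
  have hpath := List.card_exits_add_ite_mem_last S hhead hlast
  simp only [Prod.fst_swap, Prod.snd_swap, ← hG'] at hreverse
  rw [if_pos hx] at hpath
  constructor <;> intro hy <;> simp only [hy, if_true, if_false] at hpath <;> omega
end

section
/- Let G be a directed graph, x ∈ V, and k ≥ 1. Suppose there is no set S with x ∈ S and |E(S, V∖S)| < k. Then for every vertex y ≠ x reachable from x—in fact for every vertex y—there exist at least k edge-disjoint paths from x to y. Conversely, if |E(S, V∖S)| ≤ k−1 for some S containing x but not y, then there are at most k−1 edge-disjoint x→y paths. -/
/-!
Ford–Fulkerson with unit capacities. Integral flows are kept in skew-symmetric form, so that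
pushing one unit along a path `p` means adding `pathFlow p`. Starting from the zero flow, either
the target is reachable in the residual graph and the flow value grows by one, or the vertices
reachable from the source form a cut saturated by the flow, so the value equals the size of
that cut, which is at least `k`. A unit-capacity flow of value `k` then splits into `k`
edge-disjoint paths: a path of positive flow exists by the same cut argument, and subtracting it
leaves a flow of value `k - 1` that uses none of its edges. Conversely, each path of an
edge-disjoint family leaves every cut through an edge of its own.
-/

/-- A directed path from `s` to `t`: a nonempty list of distinct vertices, consecutive
pairs related by `Adj`, starting at `s` and ending at `t`. -/
def IsDiPath {α : Type*} (Adj : α → α → Prop) (s t : α) (p : List α) : Prop :=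
  p ≠ [] ∧ p.Chain' Adj ∧ p.head? = some s ∧ p.getLast? = some t ∧ p.Nodup

/-- The (directed) edges of a path given as a list of vertices. -/
def pathEdges {α : Type*} (p : List α) : List (α × α) := p.zip p.tail

namespace Menger

section paths

variable {α : Type*}

lemma pathEdges_cons_cons (a b : α) (t : List α) :
    pathEdges (a :: b :: t) = (a, b) :: pathEdges (b :: t) := rfl

lemma rel_of_mem_pathEdges {R : α → α → Prop} :
    ∀ {p : List α}, p.IsChain R → ∀ e ∈ pathEdges p, R e.1 e.2
  | a :: b :: t, h, e, he => by
    rw [List.isChain_cons_cons] at h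
    rcases List.mem_cons.mp he with rfl | he
    exacts [h.1, rel_of_mem_pathEdges h.2 e he]

lemma nodup_pathEdges : ∀ {p : List α}, p.Nodup → (pathEdges p).Nodup
  | [], _ | [_], _ => List.nodup_nil
  | a :: b :: t, h => by
    refine List.nodup_cons.mpr ⟨fun he => ?_, nodup_pathEdges h.of_cons⟩
    exact List.nodup_cons.mp h |>.1 (List.of_mem_zip he).1

lemma IsDiPath.mono {R R' : α → α → Prop} {s t : α} {p : List α} (hp : IsDiPath R s t p)
    (hR : ∀ u v, R u v → R' u v) : IsDiPath R' s t p :=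
  ⟨hp.1, List.IsChain.imp hR hp.2.1, hp.2.2⟩

lemma IsDiPath.cons {R : α → α → Prop} {s v t : α} {p : List α} (hp : IsDiPath R v t p)
    (hsv : R s v) (hs : s ∉ p) : IsDiPath R s t (s :: p) := by
  obtain ⟨hne, hc, hh, hl, hnd⟩ := hp
  refine ⟨List.cons_ne_nil s p, List.isChain_cons.mpr ⟨by simpa [hh], hc⟩, rfl, ?_,
    List.nodup_cons.mpr ⟨hs, hnd⟩⟩
  rw [List.getLast?_cons, hl, Option.getD_some]

lemma IsDiPath.suffix {R : α → α → Prop} {s v t : α} {l₁ l₂ : List α}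
    (hp : IsDiPath R v t (l₁ ++ l₂)) (hl₂ : l₂.head? = some s) : IsDiPath R s t l₂ := by
  obtain ⟨_, hc, _, hl, hnd⟩ := hp
  obtain ⟨l₂, rfl⟩ : ∃ l, l₂ = s :: l := by
    cases l₂ <;> simp_all
  exact ⟨List.cons_ne_nil s l₂, hc.suffix (List.suffix_append _ _), rfl,
    by rwa [List.getLast?_append_cons] at hl, hnd.sublist (List.suffix_append _ _).sublist⟩

lemma exists_isDiPath_of_reflTransGen {R : α → α → Prop} {s t : α}
    (h : Relation.ReflTransGen R s t) : ∃ p, IsDiPath R s t p := by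
  induction h using Relation.ReflTransGen.head_induction_on with
  | refl => exact ⟨[t], List.cons_ne_nil _ _, List.isChain_singleton _, rfl, rfl,
      List.nodup_singleton _⟩
  | @head s v hsv _ ih =>
    obtain ⟨p, hp⟩ := ih
    by_cases hs : s ∈ p
    · obtain ⟨l₁, l₂, rfl⟩ := List.append_of_mem hs
      exact ⟨_, IsDiPath.suffix hp rfl⟩
    · exact ⟨_, IsDiPath.cons hp hsv hs⟩

lemma exists_isDiPath_or_exists_cut [Fintype α] (R : α → α → Prop) (s t : α) :
    (∃ p, IsDiPath R s t p) ∨ ∃ S : Finset α, s ∈ S ∧ t ∉ S ∧ ∀ u ∈ S, ∀ v ∉ S, ¬ R u v := by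
  classical
  by_cases h : Relation.ReflTransGen R s t
  · exact .inl (exists_isDiPath_of_reflTransGen h)
  refine .inr ⟨Finset.univ.filter (Relation.ReflTransGen R s),
    by simp [Relation.ReflTransGen.refl], by simpa using h, ?_⟩
  simp only [Finset.mem_filter, Finset.mem_univ, true_and]
  exact fun u hu v hv huv => hv (hu.tail huv)

lemma exists_mem_pathEdges_leaving (P : α → Prop) :
    ∀ {p : List α} {a b : α}, p.head? = some a → p.getLast? = some b → P a → ¬ P b →
      ∃ e ∈ pathEdges p, P e.1 ∧ ¬ P e.2
  | [_], a, b, ha, hb, hPa, hPb => by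
    simp only [List.head?_cons, List.getLast?_singleton, Option.some_inj] at ha hb
    exact absurd (hb ▸ ha ▸ hPa) hPb
  | c :: d :: t, a, b, ha, hb, hPa, hPb => by
    obtain rfl : c = a := by simpa using ha
    by_cases hPd : P d
    · obtain ⟨e, he, hPe⟩ := exists_mem_pathEdges_leaving P rfl
        (by rwa [List.getLast?_cons_cons] at hb) hPd hPb
      exact ⟨e, List.mem_cons_of_mem _ he, hPe⟩
    · exact ⟨(c, d), List.mem_cons_self, hPa, hPd⟩

end paths

section pathFlow

variable {V : Type*} [DecidableEq V]

def pathFlow (p : List V) (u v : V) : ℤ :=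
  (pathEdges p).count (u, v) - (pathEdges p).count (v, u)

lemma pathFlow_swap (p : List V) (u v : V) : pathFlow p v u = -pathFlow p u v := by
  simp [pathFlow]

lemma pathFlow_cons_cons (a b : V) (t : List V) (u v : V) :
    pathFlow (a :: b :: t) u v = pathFlow (b :: t) u v
      + (if u = a then if v = b then 1 else 0 else 0)
      - if u = b then if v = a then 1 else 0 else 0 := by
  simp only [pathFlow, pathEdges_cons_cons, List.count_cons, beq_iff_eq, Prod.mk.injEq]
  split_ifs <;> grind

lemma pathFlow_le_one {p : List V} (hp : p.Nodup) (u v : V) : pathFlow p u v ≤ 1 := by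
  have := List.nodup_iff_count_le_one.mp (nodup_pathEdges hp) (u, v)
  unfold pathFlow
  omega

lemma pathFlow_nonpos {p : List V} {u v : V} (h : (u, v) ∉ pathEdges p) :
    pathFlow p u v ≤ 0 := by
  simp [pathFlow, List.count_eq_zero.mpr h]

lemma pathFlow_eq_zero {p : List V} {u v : V} (h : (u, v) ∉ pathEdges p)
    (h' : (v, u) ∉ pathEdges p) : pathFlow p u v = 0 := by
  simp [pathFlow, List.count_eq_zero.mpr h, List.count_eq_zero.mpr h']

lemma one_le_pathFlow {p : List V} {u v : V} (h : (u, v) ∈ pathEdges p)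
    (h' : (v, u) ∉ pathEdges p) : 1 ≤ pathFlow p u v := by
  simp [pathFlow, List.count_eq_zero.mpr h', h]

variable [Fintype V]

lemma sum_pathFlow_cons (w a b : V) : ∀ t : List V, (a :: t).getLast? = some b →
    ∑ v, pathFlow (a :: t) w v = (if w = a then 1 else 0) - if w = b then 1 else 0
  | [], h => by
    obtain rfl : a = b := by simpa using h
    simp [pathFlow, pathEdges]
  | c :: t, h => by
    rw [List.getLast?_cons_cons] at h
    simp only [pathFlow_cons_cons, Finset.sum_add_distrib, Finset.sum_sub_distrib,
      sum_pathFlow_cons w c b t h, Finset.sum_ite_irrel, Finset.sum_ite_eq', Finset.mem_univ,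
      if_true, Finset.sum_const_zero]
    ring

lemma sum_pathFlow {R : V → V → Prop} {s t : V} {p : List V} (hp : IsDiPath R s t p) (w : V) :
    ∑ v, pathFlow p w v = (if w = s then 1 else 0) - if w = t then 1 else 0 := by
  obtain ⟨hne, -, hs, ht, -⟩ := hp
  obtain ⟨a, l, rfl⟩ := List.exists_cons_of_ne_nil hne
  obtain rfl : a = s := by simpa using hs
  exact sum_pathFlow_cons w a t l ht

end pathFlow

lemma sum_sum_eq_zero_of_skew {ι : Type*} {g : ι → ι → ℤ} (hg : ∀ u v, g v u = -g u v)
    (S : Finset ι) :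
    ∑ u ∈ S, ∑ v ∈ S, g u v = 0 := by
  have : ∑ u ∈ S, ∑ v ∈ S, g u v = -∑ u ∈ S, ∑ v ∈ S, g u v := by
    rw [← Finset.sum_neg_distrib, Finset.sum_comm]
    exact Finset.sum_congr rfl fun u _ => by
      rw [← Finset.sum_neg_distrib]
      exact Finset.sum_congr rfl fun v _ => hg u v
  omega

section flows

variable {V : Type*} [Fintype V] [DecidableEq V]

/-- An integral `s`-`t` flow with capacities `c`, in skew-symmetric form: `g u v` is the net
amount sent from `u` to `v`, so the amount actually carried by the edge `(u, v)` is
`max (g u v) 0`. -/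
structure IsFlow (c : V → V → ℤ) (s t : V) (g : V → V → ℤ) : Prop where
  skew : ∀ u v, g v u = -g u v
  le_cap : ∀ u v, g u v ≤ c u v
  conserv : ∀ w, w ≠ s → w ≠ t → ∑ v, g w v = 0

variable {c g : V → V → ℤ} {s t : V}

lemma IsFlow.value_eq_sum_cut (hg : IsFlow c s t g) {S : Finset V} (hs : s ∈ S) (ht : t ∉ S) :
    ∑ v, g s v = ∑ u ∈ S, ∑ v ∈ Sᶜ, g u v := by
  calc ∑ v, g s v = ∑ u ∈ S, ∑ v, g u v :=
        (Finset.sum_eq_single_of_mem s hs fun w hw hws =>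
          hg.conserv w hws (ne_of_mem_of_not_mem hw ht)).symm
    _ = ∑ u ∈ S, (∑ v ∈ S, g u v + ∑ v ∈ Sᶜ, g u v) := by simp only [Finset.sum_add_sum_compl]
    _ = ∑ u ∈ S, ∑ v ∈ Sᶜ, g u v := by
      rw [Finset.sum_add_distrib, sum_sum_eq_zero_of_skew hg.skew, zero_add]

lemma IsFlow.add_pathFlow (hg : IsFlow c s t g) {p : List V}
    (hp : IsDiPath (fun u v => g u v < c u v) s t p) : IsFlow c s t (g + pathFlow p) where
  skew u v := by simp only [Pi.add_apply]; rw [hg.skew u v, pathFlow_swap]; ring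
  le_cap u v := by
    simp only [Pi.add_apply]
    by_cases huv : (u, v) ∈ pathEdges p
    · linarith [rel_of_mem_pathEdges hp.2.1 _ huv, pathFlow_le_one hp.2.2.2.2 u v]
    · linarith [hg.le_cap u v, pathFlow_nonpos huv]
  conserv w hs ht := by
    simp [Finset.sum_add_distrib, hg.conserv w hs ht, sum_pathFlow hp, hs, ht]

lemma IsFlow.sub_pathFlow_nonpos (hc : ∀ u v, c u v ≤ 1) (hg : IsFlow c s t g) {p : List V}
    (hp : IsDiPath (fun u v => 0 < g u v) s t p) {u v : V}
    (h : (u, v) ∈ pathEdges p ∨ (v, u) ∈ pathEdges p) : g u v - pathFlow p u v ≤ 0 := by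
  rcases h with huv | hvu
  · have hpos : 0 < g u v := rel_of_mem_pathEdges hp.2.1 _ huv
    have hvu : (v, u) ∉ pathEdges p := fun hvu => by
      have : 0 < g v u := rel_of_mem_pathEdges hp.2.1 _ hvu
      linarith [hg.skew u v]
    linarith [hg.le_cap u v, hc u v, one_le_pathFlow huv hvu]
  · have : 0 < g v u := rel_of_mem_pathEdges hp.2.1 _ hvu
    linarith [hg.skew u v, pathFlow_swap p u v, pathFlow_le_one hp.2.2.2.2 v u]

lemma IsFlow.sub_pathFlow (hc : ∀ u v, 0 ≤ c u v ∧ c u v ≤ 1) (hg : IsFlow c s t g)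
    {p : List V} (hp : IsDiPath (fun u v => 0 < g u v) s t p) :
    IsFlow c s t (g - pathFlow p) where
  skew u v := by simp only [Pi.sub_apply]; rw [hg.skew u v, pathFlow_swap]; ring
  le_cap u v := by
    simp only [Pi.sub_apply]
    by_cases h : (u, v) ∈ pathEdges p ∨ (v, u) ∈ pathEdges p
    · linarith [hg.sub_pathFlow_nonpos (fun u v => (hc u v).2) hp h, (hc u v).1]
    · obtain ⟨huv, hvu⟩ := not_or.mp h
      linarith [hg.le_cap u v, pathFlow_eq_zero huv hvu]
  conserv w hs ht := by
    simp [Finset.sum_sub_distrib, hg.conserv w hs ht, sum_pathFlow hp, hs, ht]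

theorem exists_flow_of_le_cut (hc : ∀ u v, 0 ≤ c u v) (hst : s ≠ t) {k : ℕ}
    (hcut : ∀ S : Finset V, s ∈ S → t ∉ S → (k : ℤ) ≤ ∑ u ∈ S, ∑ v ∈ Sᶜ, c u v) :
    ∃ g, IsFlow c s t g ∧ ∑ v, g s v = k := by
  suffices ∀ n ≤ k, ∃ g, IsFlow c s t g ∧ ∑ v, g s v = n from this k le_rfl
  intro n hn
  induction n with
  | zero => exact ⟨0, ⟨fun _ _ => by simp, hc, fun _ _ _ => by simp⟩, by simp⟩
  | succ n ih =>
    obtain ⟨g, hg, hval⟩ := ih (by omega)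
    rcases exists_isDiPath_or_exists_cut (fun u v => g u v < c u v) s t with
      ⟨p, hp⟩ | ⟨S, hs, ht, hS⟩
    · refine ⟨g + pathFlow p, hg.add_pathFlow hp, ?_⟩
      simp [Finset.sum_add_distrib, hval, sum_pathFlow hp, hst]
    · have hsat : ∑ u ∈ S, ∑ v ∈ Sᶜ, c u v ≤ ∑ u ∈ S, ∑ v ∈ Sᶜ, g u v :=
        Finset.sum_le_sum fun u hu => Finset.sum_le_sum fun v hv =>
          not_lt.mp (hS u hu v (Finset.mem_compl.mp hv))
      rw [← hg.value_eq_sum_cut hs ht, hval] at hsat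
      have : ((n + 1 : ℕ) : ℤ) ≤ k := by exact_mod_cast hn
      linarith [hcut S hs ht]

theorem exists_disjoint_paths_of_flow (hc : ∀ u v, 0 ≤ c u v ∧ c u v ≤ 1) (hst : s ≠ t) :
    ∀ (n : ℕ) (g : V → V → ℤ), IsFlow c s t g → ∑ v, g s v = n →
      ∃ p : Fin n → List V, (∀ i, IsDiPath (fun u v => 0 < g u v) s t (p i)) ∧
        Pairwise fun i j => (pathEdges (p i)).Disjoint (pathEdges (p j))
  | 0, _, _, _ => ⟨Fin.elim0, fun i => i.elim0, fun i => i.elim0⟩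
  | n + 1, g, hg, hval => by
    obtain ⟨p, hp⟩ : ∃ p, IsDiPath (fun u v => 0 < g u v) s t p := by
      refine (exists_isDiPath_or_exists_cut _ s t).resolve_right fun ⟨S, hs, ht, hS⟩ => ?_
      have : ∑ u ∈ S, ∑ v ∈ Sᶜ, g u v ≤ 0 :=
        Finset.sum_nonpos fun u hu => Finset.sum_nonpos fun v hv =>
          not_lt.mp (hS u hu v (Finset.mem_compl.mp hv))
      rw [← hg.value_eq_sum_cut hs ht, hval] at this
      omega
    obtain ⟨ps, hps, hdisj⟩ := exists_disjoint_paths_of_flow hc hst n (g - pathFlow p)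
      (hg.sub_pathFlow hc hp) (by simp [Finset.sum_sub_distrib, hval, sum_pathFlow hp, hst])
    have hsupp : ∀ u v, 0 < g u v - pathFlow p u v → 0 < g u v ∧ (u, v) ∉ pathEdges p :=
      fun u v h => by
        have hoff : ¬((u, v) ∈ pathEdges p ∨ (v, u) ∈ pathEdges p) := fun hmem =>
          not_lt.mpr (hg.sub_pathFlow_nonpos (fun u v => (hc u v).2) hp hmem) h
        obtain ⟨huv, hvu⟩ := not_or.mp hoff
        rw [pathFlow_eq_zero huv hvu, sub_zero] at h
        exact ⟨h, huv⟩
    have hdisj₀ : ∀ i, (pathEdges p).Disjoint (pathEdges (ps i)) := fun i e he hei =>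
      (hsupp e.1 e.2 (rel_of_mem_pathEdges (hps i).2.1 e hei)).2 he
    refine ⟨Fin.cons p ps,
      Fin.cases hp fun i => IsDiPath.mono (hps i) fun u v h => (hsupp u v h).1,
      pairwise_fin_succ_iff.mpr ⟨fun i => (hdisj₀ i).symm, hdisj₀, hdisj⟩⟩

end flows

section menger

variable {V : Type*} [Fintype V] [DecidableEq V] (Adj : V → V → Prop) [DecidableRel Adj]

def adjCap (u v : V) : ℤ := if Adj u v then 1 else 0

def cutEdges (S : Finset V) : Finset (V × V) :=
  Finset.univ.filter fun e : V × V => Adj e.1 e.2 ∧ e.1 ∈ S ∧ e.2 ∉ S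

lemma sum_sum_adjCap (S : Finset V) :
    ∑ u ∈ S, ∑ v ∈ Sᶜ, adjCap Adj u v = (cutEdges Adj S).card := by
  rw [← Finset.sum_product' S Sᶜ (adjCap Adj)]
  simp only [adjCap, Finset.sum_boole]
  congr 2
  ext e
  simp only [Finset.mem_filter, Finset.mem_product, Finset.mem_compl, cutEdges, Finset.mem_univ,
    true_and]
  tauto

variable {Adj} {s t : V}

theorem exists_disjoint_paths_of_le_card_cutEdges (k : ℕ)
    (hcut : ∀ S : Finset V, s ∈ S → t ∉ S → k ≤ (cutEdges Adj S).card) :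
    ∃ p : Fin k → List V, (∀ i, IsDiPath Adj s t (p i)) ∧
      Pairwise fun i j => (pathEdges (p i)).Disjoint (pathEdges (p j)) := by
  by_cases hst : s = t
  · subst hst
    exact ⟨fun _ => [s], fun _ => ⟨List.cons_ne_nil _ _, List.isChain_singleton _, rfl, rfl,
      List.nodup_singleton _⟩, fun _ _ _ => List.disjoint_nil_left _⟩
  have hc : ∀ u v, 0 ≤ adjCap Adj u v ∧ adjCap Adj u v ≤ 1 := fun u v => by
    unfold adjCap; split_ifs <;> omega
  obtain ⟨g, hg, hval⟩ := exists_flow_of_le_cut (fun u v => (hc u v).1) hst fun S hs ht => by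
    rw [sum_sum_adjCap]; exact_mod_cast hcut S hs ht
  obtain ⟨p, hp, hdisj⟩ := exists_disjoint_paths_of_flow hc hst k g hg hval
  refine ⟨p, fun i => IsDiPath.mono (hp i) fun u v h => ?_, hdisj⟩
  have := (hg.le_cap u v).trans_lt' h
  unfold adjCap at this
  split_ifs at this with huv
  · exact huv
  · omega

theorem le_card_cutEdges_of_disjoint_paths {S : Finset V} (hs : s ∈ S) (ht : t ∉ S) {k : ℕ}
    (p : Fin k → List V) (hp : ∀ i, IsDiPath Adj s t (p i))
    (hdisj : Pairwise fun i j => (pathEdges (p i)).Disjoint (pathEdges (p j))) :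
    k ≤ (cutEdges Adj S).card := by
  choose e he hcross using fun i => exists_mem_pathEdges_leaving (· ∈ S)
    (hp i).2.2.1 (hp i).2.2.2.1 hs ht
  have hinj : Function.Injective e := fun i j hij => by
    by_contra hne
    exact hdisj hne (he i) (hij ▸ he j)
  have := Finset.card_le_card_of_injOn (s := Finset.univ) (t := cutEdges Adj S) e (fun i _ =>
    Finset.mem_filter.mpr ⟨Finset.mem_univ _, rel_of_mem_pathEdges (hp i).2.1 _ (he i), hcross i⟩)
    hinj.injOn
  rwa [Finset.card_univ, Fintype.card_fin] at this

end menger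

end Menger

/-- edge version of Menger's theorem, local-cut form: In a finite digraph,
if every set `S` with `x ∈ S`, `y ∉ S` has `|E(S, V∖S)| ≥ k`, then there are `k` pairwise
edge-disjoint paths from `x` to `y`.  Conversely, if some `S` with `x ∈ S`, `y ∉ S` has
`|E(S, V∖S)| ≤ k - 1`, then there is no family of `k` pairwise edge-disjoint `x → y`
paths (i.e. there are at most `k - 1` of them). -/
theorem stmt17 {V : Type*} [Fintype V] [DecidableEq V]
    (Adj : V → V → Prop) [DecidableRel Adj]
    (x y : V) (k : ℕ) (hk : 1 ≤ k) :
    ((∀ S : Finset V, x ∈ S → y ∉ S →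
        k ≤ (Finset.univ.filter
          fun e : V × V => Adj e.1 e.2 ∧ e.1 ∈ S ∧ e.2 ∉ S).card) →
      ∃ p : Fin k → List V, (∀ i, IsDiPath Adj x y (p i)) ∧
        ∀ i j, i ≠ j → List.Disjoint (pathEdges (p i)) (pathEdges (p j)))
    ∧ (∀ S : Finset V, x ∈ S → y ∉ S →
        (Finset.univ.filter
          fun e : V × V => Adj e.1 e.2 ∧ e.1 ∈ S ∧ e.2 ∉ S).card ≤ k - 1 →
        ¬ ∃ p : Fin k → List V, (∀ i, IsDiPath Adj x y (p i)) ∧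
          ∀ i j, i ≠ j → List.Disjoint (pathEdges (p i)) (pathEdges (p j))) := by
  refine ⟨fun hcut => ?_, fun S hx hy hS ⟨p, hp, hdisj⟩ => ?_⟩
  · obtain ⟨p, hp, hdisj⟩ := Menger.exists_disjoint_paths_of_le_card_cutEdges k hcut
    exact ⟨p, hp, fun i j => @hdisj i j⟩
  · have := Menger.le_card_cutEdges_of_disjoint_paths hx hy p hp fun i j => hdisj i j
    change (Menger.cutEdges Adj S).card ≤ k - 1 at hS
    omega
end

section
/- Consider a process of k iterations where in iteration i a target yᵢ is chosen and a path from x to yᵢ is reversed, and suppose S is a set with x ∈ S and initially |E(S, V∖S)| ≤ k−1. If yᵢ ∉ S for all i ∈ {1,…,k−1} and a full path from x to yᵢ is reversed each time, then after these k−1 reversals |E(S, V∖S)| = |E₀(S, V∖S)| − (k−1) ≤ 0, so in the k-th iteration a DFS from x cannot leave S and must terminate inside S. -/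
set_option linter.unusedSectionVars false

section helpers
variable {V : Type*} [DecidableEq V]

lemma zip_tail_mem {R : V → V → Prop} : ∀ {l : List V}, l.Chain' R →
    ∀ {e : V × V}, e ∈ l.zip l.tail → R e.1 e.2 := by
  intro l
  induction l with
  | nil => intro _ e he; simp at he
  | cons a t ih =>
    intro hc e he
    cases t with
    | nil => simp at he
    | cons b r =>
      simp only [List.tail_cons, List.zip_cons_cons, List.mem_cons] at he
      rcases he with rfl | he
      · exact hc.rel_head
      · exact ih hc.tail he

lemma zip_tail_nodup : ∀ {l : List V}, l.Nodup → (l.zip l.tail).Nodup := by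
  intro l
  induction l with
  | nil => simp
  | cons a t ih =>
    intro hnd
    cases t with
    | nil => simp
    | cons b r =>
      simp only [List.tail_cons, List.zip_cons_cons]
      refine List.nodup_cons.2 ⟨?_, ih hnd.of_cons⟩
      intro hmem
      exact (List.nodup_cons.1 hnd).1 (List.of_mem_zip hmem).1

lemma cross (S : Finset V) : ∀ (l : List V) (a : V),
    (((a :: l).zip l).countP fun e => decide (e.1 ∈ S ∧ e.2 ∉ S))
      + (if (a :: l).getLast (List.cons_ne_nil a l) ∈ S then 1 else 0)
    = (((a :: l).zip l).countP fun e => decide (e.2 ∈ S ∧ e.1 ∉ S))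
      + (if a ∈ S then 1 else 0) := by
  intro l
  induction l with
  | nil => intro a; by_cases ha : a ∈ S <;> simp [ha]
  | cons b t ih =>
    intro a
    have := ih b
    simp only [List.zip_cons_cons, List.countP_cons, List.getLast_cons_cons] at *
    by_cases ha : a ∈ S <;> by_cases hb : b ∈ S <;> by_cases hl : (b :: t).getLast (List.cons_ne_nil b t) ∈ S <;> simp [ha, hb, hl] at * <;> omega

lemma step (S : Finset V) (G : Multiset (V × V)) (x yv : V) (hx : x ∈ S) (hy : yv ∉ S)
    (P : List V) (hchain : P.Chain' fun u v => (u, v) ∈ G)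
    (hhead : P.head? = some x) (hlast : P.getLast? = some yv) (hnd : P.Nodup) :
    Multiset.card ((((G - ↑(P.zip P.tail))
        + ((↑(P.zip P.tail) : Multiset (V × V)).map Prod.swap))).filter
        fun e => e.1 ∈ S ∧ e.2 ∉ S) + 1
    = Multiset.card (G.filter fun e => e.1 ∈ S ∧ e.2 ∉ S) := by
  obtain ⟨a, l, rfl⟩ : ∃ a l, P = a :: l := by
    cases P with
    | nil => simp at hhead
    | cons a l => exact ⟨a, l, rfl⟩
  obtain rfl : x = a := by simpa using hhead.symm
  have hlast' : (x :: l).getLast (List.cons_ne_nil x l) = yv := by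
    rwa [List.getLast?_eq_getLast (List.cons_ne_nil x l), Option.some_inj] at hlast
  simp only [List.tail_cons]
  set Z : Multiset (V × V) := ↑((x :: l).zip l) with hZ
  have hZle : Z ≤ G := by
    rw [Multiset.le_iff_count]
    intro e
    by_cases he : e ∈ Z
    · have h1 : Z.count e ≤ 1 :=
        (Multiset.nodup_iff_count_le_one.1 (by simpa [hZ] using zip_tail_nodup hnd)) e
      have h2 : 0 < G.count e := Multiset.count_pos.2 (by
        have := zip_tail_mem hchain (e := e) (by simpa [hZ] using he)
        simpa using this)
      omega
    · simp [Multiset.count_eq_zero_of_notMem he]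
  have hd : Multiset.card (Z.filter fun e => e.1 ∈ S ∧ e.2 ∉ S)
      = ((x :: l).zip l).countP fun e => decide (e.1 ∈ S ∧ e.2 ∉ S) := by
    simp [hZ, Multiset.filter_coe, List.countP_eq_length_filter]
  have hu : Multiset.card ((Z.map Prod.swap).filter fun e => e.1 ∈ S ∧ e.2 ∉ S)
      = ((x :: l).zip l).countP fun e => decide (e.2 ∈ S ∧ e.1 ∉ S) := by
    simp [hZ, Multiset.filter_coe, List.countP_eq_length_filter, List.filter_map,
      Prod.swap, Function.comp_def]
  have hcross := cross S l x
  rw [hlast'] at hcross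
  simp only [hy, hx, if_true, if_false] at hcross
  have hle : Multiset.card (Z.filter fun e => e.1 ∈ S ∧ e.2 ∉ S)
      ≤ Multiset.card (G.filter fun e => e.1 ∈ S ∧ e.2 ∉ S) :=
    Multiset.card_le_card (Multiset.filter_le_filter _ hZle)
  rw [Multiset.filter_add, Multiset.card_add, Multiset.filter_sub,
    Multiset.card_sub (Multiset.filter_le_filter _ hZle)]
  omega
end helpers


/-- Consider `k` iterations starting from the directed (multi)graph `G 0`,
where `x ∈ S` and initially `|E(S, V∖S)| ≤ k - 1`.  In each of the first `k - 1`
iterations, a directed path `P i` from `x` to `y i` in the current graph `G i` is fully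
reversed to obtain `G (i+1)`, and every endpoint `y i` lies outside `S`.  Then after the
`k - 1` reversals `|E(S, V∖S)| = |E₀(S, V∖S)| - (k - 1)`, which is `0`, and hence in the
`k`-th iteration a DFS from `x` cannot leave `S`: every vertex reachable from `x` in
`G (k-1)` lies in `S`. -/
theorem stmt18 {V : Type*} [DecidableEq V] (k : ℕ) (hk : 1 ≤ k)
    (G : ℕ → Multiset (V × V)) (S : Finset V) (x : V) (hx : x ∈ S)
    (y : ℕ → V) (P : ℕ → List V)
    (hcut0 : Multiset.card ((G 0).filter fun e => e.1 ∈ S ∧ e.2 ∉ S) ≤ k - 1)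
    (hpath : ∀ i < k - 1, (P i).Chain' (fun u v => (u, v) ∈ G i) ∧
        (P i).head? = some x ∧ (P i).getLast? = some (y i) ∧ (P i).Nodup)
    (hy : ∀ i < k - 1, y i ∉ S)
    (hrev : ∀ i < k - 1, G (i + 1) = (G i - ↑((P i).zip (P i).tail))
        + ((↑((P i).zip (P i).tail) : Multiset (V × V)).map Prod.swap)) :
    Multiset.card ((G (k - 1)).filter fun e => e.1 ∈ S ∧ e.2 ∉ S)
        = Multiset.card ((G 0).filter fun e => e.1 ∈ S ∧ e.2 ∉ S) - (k - 1)
    ∧ Multiset.card ((G (k - 1)).filter fun e => e.1 ∈ S ∧ e.2 ∉ S) = 0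
    ∧ ∀ v : V, Relation.ReflTransGen (fun u w => (u, w) ∈ G (k - 1)) x v → v ∈ S := by
  have key : ∀ j ≤ k - 1, Multiset.card ((G j).filter fun e => e.1 ∈ S ∧ e.2 ∉ S) + j
      = Multiset.card ((G 0).filter fun e => e.1 ∈ S ∧ e.2 ∉ S) := by
    intro j
    induction j with
    | zero => simp
    | succ n ih =>
      intro hj
      have hn : n < k - 1 := by omega
      obtain ⟨hc, hh, hl, hnd⟩ := hpath n hn
      have hstep := step S (G n) x (y n) hx (hy n hn) (P n) hc hh hl hnd
      rw [hrev n hn]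
      have ihn := ih (by omega)
      omega
  have h1 := key (k - 1) le_rfl
  have hzero : Multiset.card ((G (k - 1)).filter fun e => e.1 ∈ S ∧ e.2 ∉ S) = 0 := by
    omega
  refine ⟨by omega, hzero, ?_⟩
  intro v hv
  induction hv with
  | refl => exact hx
  | tail hrt hedge ih =>
    by_contra hvS
    have hmem : _ ∈ (G (k - 1)).filter (fun e => e.1 ∈ S ∧ e.2 ∉ S) :=
      Multiset.mem_filter.2 ⟨hedge, ih, hvS⟩
    rw [Multiset.card_eq_zero] at hzero
    rw [hzero] at hmem
    exact absurd hmem (Multiset.notMem_zero _)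
end
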